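/- Let Γ be a group and (V, μ) an algebraic group over Γ. Suppose V = V_1 ∪ … ∪ V_s is a decomposition of V into irreducible subvarieties with s minimal among all such decompositions. Then the V_i are pairwise disjoint, and the component V_i containing the identity element e is a subgroup of (V, ⊛) of index s (in particular of finite index). -/

import Mathlib

/-- The group of `Γ`-words in `d` variables: the free product `Γ ∗ F(x₁,…,x_d)`. -/
abbrev GWord (Γ : Type) [Group Γ] (d : ℕ) : Type := Monoid.Coprod Γ (FreeGroup (Fin d))

/-- Evaluation of `Γ`-words at a point of `Γ^d`: the homomorphism which is the identity
on `Γ` and sends the `i`-th variable to `v i`. -/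
def evalWord {Γ : Type} [Group Γ] {d : ℕ} (v : Fin d → Γ) : GWord Γ d →* Γ :=
  Monoid.Coprod.lift (MonoidHom.id Γ) (FreeGroup.lift v)

/-- The variety defined by a set `S` of `Γ`-words. -/
def varietyOf {Γ : Type} [Group Γ] {d : ℕ} (S : Set (GWord Γ d)) : Set (Fin d → Γ) :=
  { v | ∀ w ∈ S, evalWord v w = 1 }

/-- A subset of `Γ^d` is a variety if it is the common zero set of a set of `Γ`-words. -/
def IsVariety {Γ : Type} [Group Γ] {d : ℕ} (V : Set (Fin d → Γ)) : Prop :=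
  ∃ S : Set (GWord Γ d), V = varietyOf S

/-- The homomorphism sending a `Γ`-word to the function it defines on `V`. -/
def wordEval {Γ : Type} [Group Γ] {d : ℕ} (V : Set (Fin d → Γ)) : GWord Γ d →* (↥V → Γ) :=
  Pi.monoidHom fun v => evalWord (v : Fin d → Γ)

/-- The group `L_V` of word maps on `V`, as a subgroup of the group of all
functions `V → Γ` (with pointwise multiplication). -/
def LV {Γ : Type} [Group Γ] {d : ℕ} (V : Set (Fin d → Γ)) : Subgroup (↥V → Γ) :=
  (wordEval V).range

/-- The constant functions, as a homomorphism `Γ →* L_V`. -/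
def LV.const {Γ : Type} [Group Γ] {d : ℕ} (V : Set (Fin d → Γ)) : Γ →* ↥(LV V) :=
  (wordEval V).rangeRestrict.comp Monoid.Coprod.inl

/-- The `i`-th coordinate function, an element of `L_V`. -/
def LV.coord {Γ : Type} [Group Γ] {d : ℕ} (V : Set (Fin d → Γ)) (i : Fin d) : ↥(LV V) :=
  (wordEval V).rangeRestrict (Monoid.Coprod.inr (FreeGroup.of i))

/-- The evaluation homomorphism `h_v : L_V →* Γ` at a point `v ∈ V`. -/
def evalAt {Γ : Type} [Group Γ] {d : ℕ} (V : Set (Fin d → Γ)) (v : ↥V) : ↥(LV V) →* Γ :=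
  (Pi.evalMonoidHom (fun _ : ↥V => Γ) v).comp (LV V).subtype

/-- A family of homomorphisms `L →* Γ` is discriminating if every finite subset of `L`
is mapped injectively by some member of the family. -/
def IsDiscriminating {Γ L : Type} [Group Γ] [Group L] (H : Set (L →* Γ)) : Prop :=
  ∀ F : Finset L, ∃ h ∈ H, Set.InjOn h (F : Set L)

/-- A nonempty variety is irreducible if whenever it is a finite union of subvarieties,
one of them is the whole variety. -/
def IsIrreducibleVariety {Γ : Type} [Group Γ] {d : ℕ} (V : Set (Fin d → Γ)) : Prop :=
  IsVariety V ∧ V.Nonempty ∧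
    ∀ (n : ℕ) (W : Fin n → Set (Fin d → Γ)),
      (∀ k, IsVariety (W k)) → (∀ k, W k ⊆ V) → V = ⋃ k, W k → ∃ k, W k = V

/-- A map between varieties is algebraic if each of its coordinates is a word map. -/
def IsAlgebraicMap {Γ : Type} [Group Γ] {d d' : ℕ} (V : Set (Fin d → Γ))
    (V' : Set (Fin d' → Γ)) (F : ↥V → ↥V') : Prop :=
  ∀ i : Fin d', ∃ w : GWord Γ d, ∀ v : ↥V, (F v : Fin d' → Γ) i = evalWord (v : Fin d → Γ) w

/-- A variety is homogeneous if its algebraic automorphisms act transitively. -/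
def IsHomogeneous {Γ : Type} [Group Γ] {d : ℕ} (V : Set (Fin d → Γ)) : Prop :=
  ∀ v v' : ↥V, ∃ F : ↥V ≃ ↥V,
    IsAlgebraicMap V V ⇑F ∧ IsAlgebraicMap V V ⇑F.symm ∧ F v = v'

/-- An algebraic group over `Γ`: a nonempty variety `V ⊆ Γ^d` with a group law
whose coordinates are word maps on `V × V`. -/
structure AlgGroup (Γ : Type) [Group Γ] (d : ℕ) where
  carrier : Set (Fin d → Γ)
  isVariety : IsVariety carrier
  mul : ↥carrier → ↥carrier → ↥carrier
  one : ↥carrier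
  inv : ↥carrier → ↥carrier
  mul_assoc : ∀ a b c, mul (mul a b) c = mul a (mul b c)
  one_mul : ∀ a, mul one a = a
  mul_one : ∀ a, mul a one = a
  inv_mul : ∀ a, mul (inv a) a = one
  algebraic : ∀ i : Fin d, ∃ w : GWord Γ (d + d), ∀ a b : ↥carrier,
    (mul a b : Fin d → Γ) i = evalWord (Fin.append (a : Fin d → Γ) (b : Fin d → Γ)) w

/-- The group structure on the points of an algebraic group. -/
instance AlgGroup.group {Γ : Type} [Group Γ] {d : ℕ} (G : AlgGroup Γ d) :
    Group ↥G.carrier where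
  mul := G.mul
  one := G.one
  inv := G.inv
  mul_assoc := G.mul_assoc
  one_mul := G.one_mul
  mul_one := G.mul_one
  inv_mul_cancel := G.inv_mul

/-- The `Γ`-generating set of `L_V` consisting of the coordinate functions, their
inverses, and the nontrivial constants. -/
def LV.genSet {Γ : Type} [Group Γ] {d : ℕ} (V : Set (Fin d → Γ)) : Set ↥(LV V) :=
  {f | (∃ i, f = LV.coord V i ∨ f = (LV.coord V i)⁻¹) ∨ ∃ γ : Γ, γ ≠ 1 ∧ f = LV.const V γ}

/-- The length of an element of `L_V`: the minimal length of a word in the coordinate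
functions, their inverses, and nontrivial constants representing it. -/
noncomputable def LV.len {Γ : Type} [Group Γ] {d : ℕ} (V : Set (Fin d → Γ))
    (f : ↥(LV V)) : ℕ :=
  sInf {n | ∃ l : List ↥(LV V), l.length = n ∧ (∀ g ∈ l, g ∈ LV.genSet V) ∧ l.prod = f}

/-!
Left and right translations of an algebraic group are word maps, so they carry an irreducible
subvariety into a single member of any finite cover by varieties. Applying this first to the
translates `g W_l` and then to the set of `g` with `g W_l ⊆ W_m` (an intersection of preimages of
`W_m` under right translations), the product `W_k W_l` of any two components lies in a single
component.
Minimality of `s` means that no component contains another, and a cover of a group by nonempty,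
mutually non-nested sets that is closed under products in this sense consists exactly of the
cosets of the member containing `1`.
-/

open Function Pointwise

structure IsMulClosedCover {G ι : Type*} [Group G] (C : ι → Set G) : Prop where
  nonempty : ∀ k, (C k).Nonempty
  cover : ∀ g, ∃ k, g ∈ C k
  irredundant : ∀ k l, C k ⊆ C l → k = l
  mul_subset : ∀ k l, ∃ m, C k * C l ⊆ C m

namespace IsMulClosedCover

variable {G ι : Type*} [Group G] {C : ι → Set G}

theorem mul_subset_of_one_mem (hC : IsMulClosedCover C) {k₀ : ι} (h₀ : 1 ∈ C k₀) (k : ι) :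
    C k₀ * C k ⊆ C k ∧ C k * C k₀ ⊆ C k := by
  obtain ⟨m, hm⟩ := hC.mul_subset k₀ k
  obtain ⟨m', hm'⟩ := hC.mul_subset k k₀
  obtain rfl := hC.irredundant k m ((Set.subset_mul_right _ h₀).trans hm)
  obtain rfl := hC.irredundant k m' ((Set.subset_mul_left _ h₀).trans hm')
  exact ⟨hm, hm'⟩

theorem eq_of_one_mem (hC : IsMulClosedCover C) {a b : ι} (ha : 1 ∈ C a) (hb : 1 ∈ C b) :
    a = b :=
  hC.irredundant a b ((Set.subset_mul_left _ hb).trans (hC.mul_subset_of_one_mem ha b).1)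

def subgroup (hC : IsMulClosedCover C) {k₀ : ι} (h₀ : 1 ∈ C k₀) : Subgroup G where
  carrier := C k₀
  one_mem' := h₀
  mul_mem' ha hb := (hC.mul_subset_of_one_mem h₀ k₀).1 (Set.mul_mem_mul ha hb)
  inv_mem' {g} hg := by
    obtain ⟨l, hl⟩ := hC.cover g⁻¹
    have h1 : (1 : G) ∈ C l := by
      simpa using (hC.mul_subset_of_one_mem h₀ l).2 (Set.mul_mem_mul hl hg)
    rwa [hC.eq_of_one_mem h1 h₀] at hl

theorem mem_iff_inv_mul_mem (hC : IsMulClosedCover C) {k₀ : ι} (h₀ : 1 ∈ C k₀) {k : ι} {g : G}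
    (hg : g ∈ C k) (x : G) : x ∈ C k ↔ g⁻¹ * x ∈ hC.subgroup h₀ := by
  constructor
  · intro hx
    obtain ⟨j, hj⟩ := hC.cover g⁻¹
    obtain ⟨m, hm⟩ := hC.mul_subset j k
    have h1 : (1 : G) ∈ C m := by simpa using hm (Set.mul_mem_mul hj hg)
    obtain rfl := hC.eq_of_one_mem h1 h₀
    exact hm (Set.mul_mem_mul hj hx)
  · intro hx
    simpa using (hC.mul_subset_of_one_mem h₀ k).2 (Set.mul_mem_mul hg hx)

theorem pairwise_disjoint (hC : IsMulClosedCover C) : Pairwise (Disjoint on C) := by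
  intro k l hkl
  refine Set.disjoint_left.mpr fun g hk hl => hkl (hC.irredundant k l fun x hx => ?_)
  obtain ⟨k₀, h₀⟩ := hC.cover 1
  rwa [hC.mem_iff_inv_mul_mem h₀ hl, ← hC.mem_iff_inv_mul_mem h₀ hk]

theorem index_subgroup (hC : IsMulClosedCover C) {k₀ : ι} (h₀ : 1 ∈ C k₀) :
    (hC.subgroup h₀).index = Nat.card ι := by
  choose rep hrep using hC.nonempty
  let f : ι → G ⧸ hC.subgroup h₀ := fun k => rep k
  have hf : Function.Bijective f := by
    constructor
    · intro k l hkl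
      have : rep l ∈ C k := (hC.mem_iff_inv_mul_mem h₀ (hrep k) _).mpr (QuotientGroup.eq.mp hkl)
      by_contra hne
      exact Set.disjoint_left.mp (hC.pairwise_disjoint hne) this (hrep l)
    · refine fun q => QuotientGroup.induction_on q fun g => ?_
      obtain ⟨k, hk⟩ := hC.cover g
      exact ⟨k, QuotientGroup.eq.mpr ((hC.mem_iff_inv_mul_mem h₀ (hrep k) g).mp hk)⟩
  exact (Nat.card_congr (Equiv.ofBijective f hf)).symm

end IsMulClosedCover

theorem eq_of_subset_of_minimal_cover {α : Type*} {P : Set α → Prop} {U : Set α} {s : ℕ}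
    {W : Fin s → Set α} (hP : ∀ k, P (W k)) (hU : U = ⋃ k, W k)
    (hmin : ∀ (t : ℕ) (W' : Fin t → Set α), (∀ m, P (W' m)) → U = ⋃ m, W' m → s ≤ t)
    {k l : Fin s} (hkl : W k ⊆ W l) : k = l := by
  by_contra hne
  obtain ⟨n, rfl⟩ := Nat.exists_eq_add_one_of_ne_zero k.pos.ne'
  have hdrop : ⋃ m, W (k.succAbove m) = ⋃ m, W m := by
    refine (Set.iUnion_subset fun m => Set.subset_iUnion W _).antisymm
      (Set.iUnion_subset fun m => ?_)
    by_cases hm : m = k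
    · rw [hm]
      obtain ⟨j, hj⟩ := Fin.exists_succAbove_eq (Ne.symm hne)
      exact hkl.trans (hj ▸ Set.subset_iUnion (fun j => W (k.succAbove j)) j)
    · obtain ⟨j, hj⟩ := Fin.exists_succAbove_eq hm
      exact hj ▸ Set.subset_iUnion (fun j => W (k.succAbove j)) j
  have := hmin n _ (fun m => hP _) (hU.trans hdrop.symm)
  omega

def GWord.subst {Γ : Type} [Group Γ] {d e : ℕ} (u : Fin e → GWord Γ d) :
    GWord Γ e →* GWord Γ d :=
  Monoid.Coprod.lift Monoid.Coprod.inl (FreeGroup.lift u)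

def wordMap {Γ : Type} [Group Γ] {d e : ℕ} (u : Fin e → GWord Γ d) (v : Fin d → Γ) :
    Fin e → Γ :=
  fun i => evalWord v (u i)

section Words

variable {Γ : Type} [Group Γ] {d e : ℕ}

@[simp]
theorem evalWord_inl (v : Fin d → Γ) (γ : Γ) : evalWord v (Monoid.Coprod.inl γ) = γ := by
  simp [evalWord]

@[simp]
theorem evalWord_inr_of (v : Fin d → Γ) (i : Fin d) :
    evalWord v (Monoid.Coprod.inr (FreeGroup.of i)) = v i := by
  simp [evalWord]

theorem evalWord_subst (u : Fin e → GWord Γ d) (v : Fin d → Γ) (w : GWord Γ e) :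
    evalWord v (GWord.subst u w) = evalWord (wordMap u v) w := by
  suffices (evalWord v).comp (GWord.subst u) = evalWord (wordMap u v) from
    DFunLike.congr_fun this w
  refine Monoid.Coprod.hom_ext (MonoidHom.ext fun γ => ?_) (FreeGroup.ext_hom _ _ fun j => ?_)
    <;> simp [GWord.subst, wordMap]

theorem wordMap_append {e' : ℕ} (u : Fin e → GWord Γ d) (u' : Fin e' → GWord Γ d)
    (v : Fin d → Γ) : wordMap (Fin.append u u') v = Fin.append (wordMap u v) (wordMap u' v) := by
  funext j
  refine Fin.addCases (fun j => ?_) (fun j => ?_) j <;> simp [wordMap]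

theorem wordMap_inl (c v : Fin d → Γ) : wordMap (fun j => Monoid.Coprod.inl (c j)) v = c := by
  funext j; simp [wordMap]

theorem wordMap_inr_of (v : Fin d → Γ) :
    wordMap (fun j => Monoid.Coprod.inr (FreeGroup.of j)) v = v := by
  funext j; simp [wordMap]

end Words

section Varieties

variable {Γ : Type} [Group Γ] {d e : ℕ}

theorem IsVariety.preimage_wordMap {W : Set (Fin e → Γ)} (hW : IsVariety W)
    (u : Fin e → GWord Γ d) : IsVariety (wordMap u ⁻¹' W) := by
  obtain ⟨T, rfl⟩ := hW
  refine ⟨GWord.subst u '' T, Set.ext fun v => ?_⟩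
  simp [varietyOf, evalWord_subst]

theorem IsVariety.inter {A B : Set (Fin d → Γ)} (hA : IsVariety A) (hB : IsVariety B) :
    IsVariety (A ∩ B) := by
  obtain ⟨S, rfl⟩ := hA
  obtain ⟨T, rfl⟩ := hB
  refine ⟨S ∪ T, Set.ext fun v => ?_⟩
  simp [varietyOf, or_imp, forall_and]

theorem IsVariety.iInter {ι : Sort*} {W : ι → Set (Fin d → Γ)} (hW : ∀ i, IsVariety (W i)) :
    IsVariety (⋂ i, W i) := by
  choose T hT using hW
  refine ⟨⋃ i, T i, Set.ext fun v => ?_⟩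
  simp only [hT, varietyOf, Set.mem_iInter, Set.mem_iUnion]
  exact ⟨fun h w ⟨i, hw⟩ => h i w hw, fun h i w hw => h w ⟨i, hw⟩⟩

theorem IsIrreducibleVariety.exists_subset_of_subset_iUnion {V : Set (Fin d → Γ)}
    (hV : IsIrreducibleVariety V) {n : ℕ} {W : Fin n → Set (Fin d → Γ)}
    (hW : ∀ k, IsVariety (W k)) (hVW : V ⊆ ⋃ k, W k) : ∃ k, V ⊆ W k := by
  have hcov : V = ⋃ k, V ∩ W k := by rw [← Set.inter_iUnion, Set.inter_eq_left.mpr hVW]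
  obtain ⟨k, hk⟩ := hV.2.2 n _ (fun k => hV.1.inter (hW k)) (fun k => Set.inter_subset_left) hcov
  exact ⟨k, hk ▸ Set.inter_subset_right⟩

end Varieties

namespace AlgGroup

variable {Γ : Type} [Group Γ] {d : ℕ} (G : AlgGroup Γ d)

theorem exists_wordMap_mul_left (g : G.carrier) :
    ∃ u : Fin d → GWord Γ d,
      ∀ x : G.carrier, ((g * x : G.carrier) : Fin d → Γ) = wordMap u x := by
  choose w hw using G.algebraic
  refine ⟨fun i => GWord.subst (Fin.append (fun j => Monoid.Coprod.inl ((g : Fin d → Γ) j))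
    (fun j => Monoid.Coprod.inr (FreeGroup.of j))) (w i), fun x => funext fun i => ?_⟩
  simp only [wordMap, evalWord_subst, wordMap_append, wordMap_inl, wordMap_inr_of]
  exact hw i g x

theorem exists_wordMap_mul_right (x : G.carrier) :
    ∃ u : Fin d → GWord Γ d,
      ∀ g : G.carrier, ((g * x : G.carrier) : Fin d → Γ) = wordMap u g := by
  choose w hw using G.algebraic
  refine ⟨fun i => GWord.subst (Fin.append (fun j => Monoid.Coprod.inr (FreeGroup.of j))
    (fun j => Monoid.Coprod.inl ((x : Fin d → Γ) j))) (w i), fun g => funext fun i => ?_⟩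
  simp only [wordMap, evalWord_subst, wordMap_append, wordMap_inl, wordMap_inr_of]
  exact hw i g x

variable {G} {n : ℕ} {W : Fin n → Set (Fin d → Γ)}

theorem exists_smul_subset (hW : ∀ k, IsVariety (W k)) (hcover : G.carrier ⊆ ⋃ k, W k)
    {B : Set (Fin d → Γ)} (hB : IsIrreducibleVariety B) (hBG : B ⊆ G.carrier) (g : G.carrier) :
    ∃ m, g • (Subtype.val ⁻¹' B : Set G.carrier) ⊆ Subtype.val ⁻¹' W m := by
  obtain ⟨u, hu⟩ := G.exists_wordMap_mul_left g
  obtain ⟨m, hm⟩ := hB.exists_subset_of_subset_iUnion (fun k => (hW k).preimage_wordMap u)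
    fun v hv => by
      simpa [← hu ⟨v, hBG hv⟩] using hcover (g * ⟨v, hBG hv⟩).2
  refine ⟨m, ?_⟩
  rintro _ ⟨x, hx, rfl⟩
  simpa [hu] using hm hx

theorem exists_mul_subset (hW : ∀ k, IsVariety (W k)) (hcover : G.carrier ⊆ ⋃ k, W k)
    {A B : Set (Fin d → Γ)} (hA : IsIrreducibleVariety A) (hAG : A ⊆ G.carrier)
    (hB : IsIrreducibleVariety B) (hBG : B ⊆ G.carrier) :
    ∃ m, (Subtype.val ⁻¹' A : Set G.carrier) * Subtype.val ⁻¹' B ⊆ Subtype.val ⁻¹' W m := by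
  choose u hu using G.exists_wordMap_mul_right
  let P : Fin n → Set (Fin d → Γ) := fun m =>
    ⋂ x : {x : G.carrier // (x : Fin d → Γ) ∈ B}, wordMap (u x) ⁻¹' W m
  obtain ⟨m, hm⟩ := hA.exists_subset_of_subset_iUnion (W := P)
    (fun m => IsVariety.iInter fun x => (hW m).preimage_wordMap _) fun v hv => by
      obtain ⟨m, hm⟩ := exists_smul_subset hW hcover hB hBG ⟨v, hAG hv⟩
      refine Set.mem_iUnion.mpr ⟨m, Set.mem_iInter.mpr fun x => ?_⟩
      have := hm (Set.smul_mem_smul_set (a := (⟨v, hAG hv⟩ : G.carrier)) x.2)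
      rwa [smul_eq_mul, Set.mem_preimage, hu] at this
  refine ⟨m, Set.mul_subset_iff.mpr fun g hg x hx => ?_⟩
  simpa [hu] using Set.mem_iInter.mp (hm hg) ⟨x, hx⟩

theorem isMulClosedCover_components {s : ℕ} {W : Fin s → Set (Fin d → Γ)}
    (hW : ∀ k, IsIrreducibleVariety (W k)) (hsub : ∀ k, W k ⊆ G.carrier)
    (hcover : G.carrier = ⋃ k, W k) (hirr : ∀ k l, W k ⊆ W l → k = l) :
    IsMulClosedCover fun k => (Subtype.val ⁻¹' W k : Set G.carrier) where
  nonempty k := let ⟨v, hv⟩ := (hW k).2.1; ⟨⟨v, hsub k hv⟩, hv⟩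
  cover g := by simpa [hcover] using g.2
  irredundant k l hkl := hirr k l fun v hv => hkl (a := ⟨v, hsub k hv⟩) hv
  mul_subset k l :=
    exists_mul_subset (fun k => (hW k).1) hcover.subset (hW k) (hsub k) (hW l) (hsub l)

end AlgGroup

/-- the irreducible components of an algebraic group are pairwise
disjoint, and the component of the identity is a subgroup of index `s`. -/
theorem stmt_14 {Γ : Type} [Group Γ] {d : ℕ} (G : AlgGroup Γ d) (s : ℕ)
    (W : Fin s → Set (Fin d → Γ))
    (hW : ∀ k, IsIrreducibleVariety (W k)) (hsub : ∀ k, W k ⊆ G.carrier)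
    (hcover : G.carrier = ⋃ k, W k)
    (hmin : ∀ (t : ℕ) (W' : Fin t → Set (Fin d → Γ)),
      (∀ k, IsIrreducibleVariety (W' k)) → (∀ k, W' k ⊆ G.carrier) →
      G.carrier = ⋃ k, W' k → s ≤ t) :
    (∀ k l, k ≠ l → W k ∩ W l = ∅) ∧
    ∃ k₀ : Fin s, (G.one : Fin d → Γ) ∈ W k₀ ∧
      ∃ H : Subgroup ↥G.carrier,
        (H : Set ↥G.carrier) = {v : ↥G.carrier | (v : Fin d → Γ) ∈ W k₀} ∧
        H.index = s := by
  have hirr : ∀ k l, W k ⊆ W l → k = l := fun k l =>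
    eq_of_subset_of_minimal_cover (P := fun V => IsIrreducibleVariety V ∧ V ⊆ G.carrier)
      (fun k => ⟨hW k, hsub k⟩) hcover fun t W' hW' =>
        hmin t W' (fun m => (hW' m).1) fun m => (hW' m).2
  have hC := G.isMulClosedCover_components hW hsub hcover hirr
  obtain ⟨k₀, h₀⟩ := hC.cover 1
  refine ⟨fun k l hkl => ?_, k₀, h₀, hC.subgroup h₀, rfl, by simp [hC.index_subgroup]⟩
  refine Set.eq_empty_iff_forall_notMem.mpr fun v ⟨hk, hl⟩ => ?_
  exact Set.disjoint_left.mp (hC.pairwise_disjoint hkl)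
    (show (⟨v, hsub k hk⟩ : G.carrier) ∈ _ from hk) hl
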